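/- If Z' is a cut in H that violates no clause of the form u_α⁻ v_β⁻ (the clauses not belonging to bundles), and Z is the set of vertices v such that Z' violates the bundle B_v, then Z is a multiway cut for X and for every (u,v) ∈ 𝒯 there is no path from u to v in G − Z. -/
import Mathlib


/-!
STATEMENT 3: the backward direction of the correctness of the reduction from a
bipedal weighted multicut instance to Generalized Digraph Pair Cut (see the file
for STATEMENT 2 for the description of the construction of `H`).

Claim: if `Z'` is a cut in `H` (a set of bundle arcs such that `H − Z'` has no path
from `src` to `snk`) violating no terminal clause `u_α⁻ v_β⁻`, and `Z` is the set of
vertices `v` whose bundle `B_v` is violated by `Z'` (i.e. `Z'` contains an arc of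
`B_v`, or both `v_s⁺` and `v_t⁺` are reachable from `src` in `H − Z'`), then `Z` is
a multiway cut for `X` and for every `(u,v) ∈ 𝒯` there is no path from `u` to `v`
in `G − Z`.
-/


variable {V : Type*}

/-- Reachability in the undirected graph `G` with the vertex set `S` removed. -/
def rAvoid (G : SimpleGraph V) (S : Set V) : V → V → Prop :=
  Relation.ReflTransGen fun a b => G.Adj a b ∧ a ∉ S ∧ b ∉ S

/-- The vertices of the digraph `H`: a source, a sink, and four copies
`node v α sign` of every vertex `v`. -/
inductive HV (V : Type*) where
  | src : HV V
  | snk : HV V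
  | node : V → Bool → Bool → HV V

/-- The arcs of the digraph `H` built from a bipedal instance. -/
inductive HAdj (G : SimpleGraph V) (X : Set V) (sC tC : V → Option V) :
    HV V → HV V → Prop where
  /-- the bundle arc `(v_α⁻, v_α⁺)` -/
  | bundle (v : V) (hv : v ∉ X) (α : Bool) :
      HAdj G X sC tC (.node v α false) (.node v α true)
  /-- for an edge `uv` of `G − X`, the arcs `(u_α⁺, v_α⁻)` (both directions, by
  symmetry of `Adj`) -/
  | intra (u v : V) (hu : u ∉ X) (hv : v ∉ X) (h : G.Adj u v) (α : Bool) :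
      HAdj G X sC tC (.node u α true) (.node v α false)
  /-- for an edge `v s_C`, the arc `(src, v_s⁻)` -/
  | srcS (v x : V) (hv : v ∉ X) (h : G.Adj v x) (hx : sC v = some x) :
      HAdj G X sC tC .src (.node v false false)
  /-- for an edge `v s_C`, the arc `(v_t⁺, snk)` -/
  | snkS (v x : V) (hv : v ∉ X) (h : G.Adj v x) (hx : sC v = some x) :
      HAdj G X sC tC (.node v true true) .snk
  /-- for an edge `v t_C`, the arc `(src, v_t⁻)` -/
  | srcT (v x : V) (hv : v ∉ X) (h : G.Adj v x) (hx : tC v = some x) :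
      HAdj G X sC tC .src (.node v true false)
  /-- for an edge `v t_C`, the arc `(v_s⁺, snk)` -/
  | snkT (v x : V) (hv : v ∉ X) (h : G.Adj v x) (hx : tC v = some x) :
      HAdj G X sC tC (.node v false true) .snk

/-- `labOf sC tC v α` is the leg of the component of `v` carrying the label `α`. -/
def labOf (sC tC : V → Option V) (v : V) (α : Bool) : Option V :=
  if α then tC v else sC v

/-- Reachability in `H` after removing the arc set `Z'`. -/
def hReach (G : SimpleGraph V) (X : Set V) (sC tC : V → Option V)
    (Z' : Set (HV V × HV V)) : HV V → HV V → Prop :=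
  Relation.ReflTransGen fun p q => HAdj G X sC tC p q ∧ (p, q) ∉ Z'

/-- The set of all arcs belonging to some bundle `B_v`. -/
def bundleArcs (X : Set V) : Set (HV V × HV V) :=
  {p | ∃ v ∉ X, ∃ α : Bool, p = (.node v α false, .node v α true)}


lemma rAvoid_symm' {G : SimpleGraph V} {S : Set V} {a b : V} (h : rAvoid G S a b) :
    rAvoid G S b a := by
  induction h with
  | refl => exact Relation.ReflTransGen.refl
  | tail _ h2 ih => exact Relation.ReflTransGen.head ⟨h2.1.symm, h2.2.2, h2.2.1⟩ ih

lemma rAvoid_mono' {G : SimpleGraph V} {S T : Set V} (hST : S ⊆ T) {a b : V}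
    (h : rAvoid G T a b) : rAvoid G S a b := by
  induction h with
  | refl => exact Relation.ReflTransGen.refl
  | tail _ h2 ih =>
      exact ih.tail ⟨h2.1, fun hc => h2.2.1 (hST hc), fun hc => h2.2.2 (hST hc)⟩

lemma rAvoid_end' {G : SimpleGraph V} {S : Set V} {a b : V} (h : rAvoid G S a b) :
    a = b ∨ b ∉ S := by
  rcases Relation.ReflTransGen.cases_tail h with h | ⟨c, _, hc⟩
  · exact Or.inl h.symm
  · exact Or.inr hc.2.2

lemma reach_start' {G : SimpleGraph V} {X : Set V} {sC tC : V → Option V}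
    {Z' : Set (HV V × HV V)} (hZ'sub : Z' ⊆ bundleArcs X)
    {w x : V} {α : Bool} (hw : w ∉ X) (hadj : G.Adj w x)
    (hlab : labOf sC tC w α = some x) :
    hReach G X sC tC Z' .src (.node w α false) := by
  have harc : HAdj G X sC tC .src (.node w α false) := by
    cases α with
    | false => exact HAdj.srcS w x hw hadj (by simpa [labOf] using hlab)
    | true => exact HAdj.srcT w x hw hadj (by simpa [labOf] using hlab)
  refine Relation.ReflTransGen.single ⟨harc, fun hc => ?_⟩
  rcases hZ'sub hc with ⟨v, _, β, hp⟩
  simp [Prod.ext_iff] at hp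

lemma reach_prop' {G : SimpleGraph V} {X Z : Set V} {sC tC : V → Option V}
    {Z' : Set (HV V × HV V)} (hZ'sub : Z' ⊆ bundleArcs X)
    (hB : ∀ v, v ∉ X → v ∉ Z → ∀ α : Bool,
      ((.node v α false : HV V), (.node v α true : HV V)) ∉ Z')
    {a b : V} {α : Bool} (h : rAvoid G (X ∪ Z) a b)
    (ha : hReach G X sC tC Z' .src (.node a α false)) :
    hReach G X sC tC Z' .src (.node b α false) := by
  induction h with
  | refl => exact ha
  | @tail c d h1 h2 ih =>
      have hcX : c ∉ X := fun hx => h2.2.1 (Or.inl hx)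
      have hcZ : c ∉ Z := fun hz => h2.2.1 (Or.inr hz)
      have hdX : d ∉ X := fun hx => h2.2.2 (Or.inl hx)
      refine ((ih.tail ⟨HAdj.bundle c hcX α, hB c hcX hcZ α⟩).tail
        ⟨HAdj.intra c d hcX hdX h2.1 α, fun hc => ?_⟩)
      rcases hZ'sub hc with ⟨v, _, β, hp⟩
      simp [Prod.ext_iff] at hp

lemma core' {G : SimpleGraph V} {X Z : Set V} {sC tC : V → Option V}
    {Z' : Set (HV V × HV V)}
    (hInv : ∀ v w : V, v ∉ X → w ∉ X → rAvoid G X v w → sC v = sC w ∧ tC v = tC w)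
    (hN : ∀ v : V, v ∉ X → ∀ x : V,
      ((x ∈ X ∧ ∃ w : V, w ∉ X ∧ rAvoid G X v w ∧ G.Adj w x) ↔
        (sC v = some x ∨ tC v = some x)))
    (hZ'sub : Z' ⊆ bundleArcs X)
    (hB : ∀ v, v ∉ X → v ∉ Z → ∀ α : Bool,
      ((.node v α false : HV V), (.node v α true : HV V)) ∉ Z')
    (hcut : ¬ hReach G X sC tC Z' .src .snk)
    {x y w1 w2 : V} (hx : x ∈ X) (hy : y ∈ X) (hxy : x ≠ y)
    (hw1X : w1 ∉ X) (hw2X : w2 ∉ X) (hw2Z : w2 ∉ Z)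
    (hadj1 : G.Adj x w1) (hpath : rAvoid G (X ∪ Z) w1 w2) (hadj2 : G.Adj w2 y) :
    False := by
  have hpathX : rAvoid G X w1 w2 := rAvoid_mono' Set.subset_union_left hpath
  have h1 : sC w1 = some x ∨ tC w1 = some x :=
    (hN w1 hw1X x).mp ⟨hx, w1, hw1X, Relation.ReflTransGen.refl, hadj1.symm⟩
  have h2 : sC w2 = some y ∨ tC w2 = some y :=
    (hN w2 hw2X y).mp ⟨hy, w2, hw2X, Relation.ReflTransGen.refl, hadj2⟩
  obtain ⟨α, hα⟩ : ∃ α : Bool, labOf sC tC w1 α = some x := by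
    rcases h1 with h | h
    · exact ⟨false, by simpa [labOf] using h⟩
    · exact ⟨true, by simpa [labOf] using h⟩
  obtain ⟨β, hβ⟩ : ∃ β : Bool, labOf sC tC w2 β = some y := by
    rcases h2 with h | h
    · exact ⟨false, by simpa [labOf] using h⟩
    · exact ⟨true, by simpa [labOf] using h⟩
  have hinv := hInv w1 w2 hw1X hw2X hpathX
  have hβ1 : labOf sC tC w1 β = some y := by
    cases β
    · have h' : sC w2 = some y := by simpa [labOf] using hβ
      simpa [labOf, hinv.1] using h'
    · have h' : tC w2 = some y := by simpa [labOf] using hβ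
      simpa [labOf, hinv.2] using h'
  by_cases hab : α = β
  · subst hab
    rw [hα] at hβ1
    exact hxy (Option.some.inj hβ1)
  · -- α = !β; build an src → snk path
    have hr1 : hReach G X sC tC Z' .src (.node w1 α false) :=
      reach_start' hZ'sub hw1X hadj1.symm hα
    have hr2 : hReach G X sC tC Z' .src (.node w2 α false) :=
      reach_prop' hZ'sub hB hpath hr1
    have hr3 : hReach G X sC tC Z' .src (.node w2 α true) :=
      hr2.tail ⟨HAdj.bundle w2 hw2X α, hB w2 hw2X hw2Z α⟩
    have hsnk : HAdj G X sC tC (.node w2 α true) .snk := by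
      cases β with
      | false =>
          have : α = true := by
            cases α with
            | false => exact absurd rfl hab
            | true => rfl
          subst this
          exact HAdj.snkS w2 y hw2X hadj2 (by simpa [labOf] using hβ)
      | true =>
          have : α = false := by
            cases α with
            | false => rfl
            | true => exact absurd rfl hab
          subst this
          exact HAdj.snkT w2 y hw2X hadj2 (by simpa [labOf] using hβ)
    refine hcut (hr3.tail ⟨hsnk, fun hc => ?_⟩)
    rcases hZ'sub hc with ⟨v, _, β', hp⟩
    simp [Prod.ext_iff] at hp

theorem stmt_3 [Fintype V] (G : SimpleGraph V) (𝒯 : Set (V × V)) (X : Set V)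
    (sC tC : V → Option V)
    -- terminals are outside `X`
    (hTX : ∀ p ∈ 𝒯, p.1 ∉ X ∧ p.2 ∉ X)
    -- `X` is an independent set
    (hXind : ∀ x ∈ X, ∀ y ∈ X, ¬ G.Adj x y)
    -- every terminal pair lies in distinct connected components of `G − X`
    (hsep : ∀ p ∈ 𝒯, ¬ rAvoid G X p.1 p.2)
    -- `sC`, `tC` are constant on connected components of `G − X`
    (hInv : ∀ v w : V, v ∉ X → w ∉ X → rAvoid G X v w → sC v = sC w ∧ tC v = tC w)
    -- the values of `sC v`, `tC v` enumerate exactly `N_G(C(v)) ⊆ X`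
    (hN : ∀ v : V, v ∉ X → ∀ x : V,
      ((x ∈ X ∧ ∃ w : V, w ∉ X ∧ rAvoid G X v w ∧ G.Adj w x) ↔
        (sC v = some x ∨ tC v = some x)))
    -- `s_C` and `t_C` are distinct
    (hne : ∀ v : V, v ∉ X → ∀ x : V, ¬ (sC v = some x ∧ tC v = some x))
    -- `Z'` is a cut: a set of bundle arcs with no `src → snk` path in `H − Z'`
    (Z' : Set (HV V × HV V))
    (hZ'sub : Z' ⊆ bundleArcs X)
    (hcut : ¬ hReach G X sC tC Z' .src .snk)
    -- `Z'` violates no terminal clause `u_α⁻ v_β⁻` (the clauses not in bundles)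
    (hnoterm : ∀ p ∈ 𝒯, ∀ x : V, ∀ α β : Bool,
      labOf sC tC p.1 α = some x → labOf sC tC p.2 β = some x →
      ¬ (hReach G X sC tC Z' .src (.node p.1 α false) ∧
         hReach G X sC tC Z' .src (.node p.2 β false)))
    -- `Z` is the set of vertices whose bundle is violated by `Z'`
    (Z : Set V)
    (hZ : Z = {v | v ∉ X ∧
      ((∃ α : Bool, ((.node v α false : HV V), (.node v α true : HV V)) ∈ Z') ∨
        (hReach G X sC tC Z' .src (.node v false true) ∧
         hReach G X sC tC Z' .src (.node v true true)))}) :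
    -- `Z` is a multiway cut for `X` …
    (∀ x ∈ X, ∀ y ∈ X, rAvoid G Z x y → x = y) ∧
    -- … and a multicut: no terminal pair is connected in `G − Z`.
    (∀ p ∈ 𝒯, ¬ rAvoid G Z p.1 p.2) := by
  have hB : ∀ v, v ∉ X → v ∉ Z → ∀ α : Bool,
      ((.node v α false : HV V), (.node v α true : HV V)) ∉ Z' := by
    intro v hvX hvZ α harc
    exact hvZ (by rw [hZ]; exact ⟨hvX, Or.inl ⟨α, harc⟩⟩)
  -- Claim C: everything reachable from `x ∈ X` in `G − Z` is `x` itself or lies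
  -- in a fixed component attached to `x`.
  have claimC : ∀ x ∈ X, ∀ b, rAvoid G Z x b →
      b = x ∨ (b ∉ X ∧ b ∉ Z ∧ ∃ w1, G.Adj x w1 ∧ w1 ∉ X ∧ rAvoid G (X ∪ Z) w1 b) := by
    intro x hx b h
    induction h with
    | refl => exact Or.inl rfl
    | @tail b c h1 h2 ih =>
      rcases ih with hbx | ⟨hbX, hbZ, w1, haw, hw1X, hpath⟩
      · subst hbx
        have hcX : c ∉ X := fun hcx => hXind b hx c hcx h2.1
        exact Or.inr ⟨hcX, h2.2.2, c, h2.1, hcX, Relation.ReflTransGen.refl⟩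
      · by_cases hcX : c ∈ X
        · left
          by_contra hcx
          exact core' hInv hN hZ'sub hB hcut hx hcX (fun he => hcx he.symm) hw1X hbX
            h2.2.1 haw hpath h2.1
        · exact Or.inr ⟨hcX, h2.2.2, w1, haw, hw1X,
            hpath.tail ⟨h2.1, fun hc => hc.elim hbX h2.2.1, fun hc => hc.elim hcX h2.2.2⟩⟩
  have part1 : ∀ x ∈ X, ∀ y ∈ X, rAvoid G Z x y → x = y := by
    intro x hx y hy h
    rcases claimC x hx y h with h' | ⟨hyX, _⟩
    · exact h'.symm
    · exact absurd hy hyX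
  refine ⟨part1, ?_⟩
  -- Claim D: a path from a non-`X` vertex either stays in its component or
  -- leaves it through some `x ∈ X` adjacent to the component.
  have claimD : ∀ u, u ∉ X → ∀ b, rAvoid G Z u b →
      rAvoid G (X ∪ Z) u b ∨
      (∃ x ∈ X, ∃ w1, w1 ∉ X ∧ rAvoid G (X ∪ Z) u w1 ∧ G.Adj w1 x ∧ rAvoid G Z x b) := by
    intro u hu b h
    induction h with
    | refl => exact Or.inl Relation.ReflTransGen.refl
    | @tail b c h1 h2 ih =>
      rcases ih with hl | ⟨x, hx, w1, hw1X, hp1, hadj, hp2⟩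
      · have hbX : b ∉ X := by
          rcases rAvoid_end' hl with he | hb
          · exact he ▸ hu
          · exact fun hh => hb (Or.inl hh)
        by_cases hcX : c ∈ X
        · exact Or.inr ⟨c, hcX, b, hbX, hl, h2.1, Relation.ReflTransGen.refl⟩
        · exact Or.inl (hl.tail
            ⟨h2.1, fun hc => hc.elim hbX h2.2.1, fun hc => hc.elim hcX h2.2.2⟩)
      · exact Or.inr ⟨x, hx, w1, hw1X, hp1, hadj, hp2.tail h2⟩
  intro p hp hcon
  obtain ⟨hu, hv⟩ := hTX p hp
  rcases claimD p.1 hu p.2 hcon with hl | ⟨x, hx, w1, hw1X, hp1, hadj1, hp2⟩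
  · exact hsep p hp (rAvoid_mono' Set.subset_union_left hl)
  · have hvx : rAvoid G Z p.2 x := rAvoid_symm' hp2
    rcases claimD p.2 hv x hvx with hl2 | ⟨y, hy, w2, hw2X, hq1, hadj2, hq2⟩
    · rcases rAvoid_end' hl2 with he | hxm
      · exact hv (by rw [he]; exact hx)
      · exact hxm (Or.inl hx)
    · have hyx : y = x := part1 y hy x hx hq2
      subst hyx
      have hp1X : rAvoid G X p.1 w1 := rAvoid_mono' Set.subset_union_left hp1
      have hq1X : rAvoid G X p.2 w2 := rAvoid_mono' Set.subset_union_left hq1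
      have h1 : sC p.1 = some y ∨ tC p.1 = some y :=
        (hN p.1 hu y).mp ⟨hy, w1, hw1X, hp1X, hadj1⟩
      have h2 : sC p.2 = some y ∨ tC p.2 = some y :=
        (hN p.2 hv y).mp ⟨hy, w2, hw2X, hq1X, hadj2⟩
      obtain ⟨α, hα⟩ : ∃ α : Bool, labOf sC tC p.1 α = some y := by
        rcases h1 with h | h
        · exact ⟨false, by simpa [labOf] using h⟩
        · exact ⟨true, by simpa [labOf] using h⟩
      obtain ⟨β, hβ⟩ : ∃ β : Bool, labOf sC tC p.2 β = some y := by
        rcases h2 with h | h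
        · exact ⟨false, by simpa [labOf] using h⟩
        · exact ⟨true, by simpa [labOf] using h⟩
      have hinv1 := hInv p.1 w1 hu hw1X hp1X
      have hinv2 := hInv p.2 w2 hv hw2X hq1X
      have hαw : labOf sC tC w1 α = some y := by
        cases α
        · have h' : sC p.1 = some y := by simpa [labOf] using hα
          simp only [labOf, Bool.false_eq_true, if_false, ← hinv1.1]; exact h'
        · have h' : tC p.1 = some y := by simpa [labOf] using hα
          simp only [labOf, if_true, ← hinv1.2]; exact h'
      have hβw : labOf sC tC w2 β = some y := by
        cases β
        · have h' : sC p.2 = some y := by simpa [labOf] using hβ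
          simp only [labOf, Bool.false_eq_true, if_false, ← hinv2.1]; exact h'
        · have h' : tC p.2 = some y := by simpa [labOf] using hβ
          simp only [labOf, if_true, ← hinv2.2]; exact h'
      have hr1 : hReach G X sC tC Z' .src (.node p.1 α false) :=
        reach_prop' hZ'sub hB (rAvoid_symm' hp1)
          (reach_start' hZ'sub hw1X hadj1 hαw)
      have hr2 : hReach G X sC tC Z' .src (.node p.2 β false) :=
        reach_prop' hZ'sub hB (rAvoid_symm' hq1)
          (reach_start' hZ'sub hw2X hadj2 hβw)
      exact hnoterm p hp y α β hα hβ ⟨hr1, hr2⟩
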